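/- Let s be an l-safe higher-order stack and let a be a lambda symbol with ord(a) < l. Then Decomp_l(push₁ a^(j,1) s) = Decomp_l(s), hence push₁ a^(j,1) s is l-safe. -/

import Mathlib

/-- An annotated symbol: a stack symbol together with its link `(j, h)`
(link order `j`, link height `h`). -/
abbrev Ann (Γ : Type) := Γ × ℕ × ℕ

/-- Higher-order stacks with links: an order-0 stack is an annotated symbol, and an
order-(m+1) stack is a (finite) sequence of order-m stacks, the top at the end.
An order-1 stack is thus a sequence of annotated symbols. -/
def Stk (Γ : Type) : ℕ → Type
  | 0 => Ann Γ
  | m + 1 => List (Stk Γ m)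

variable {Γ : Type}

/-- Apply `f` to the last (top) element of a list, if any. -/
def modLast {α : Type} (f : α → α) : List α → List α
  | [] => []
  | [a] => [f a]
  | a :: b :: r => a :: modLast f (b :: r)

/-- The top order-1 stack of a higher-order stack. -/
def top1 : ∀ {m : ℕ}, Stk Γ (m + 1) → Stk Γ 1
  | 0, s => s
  | m + 1, s => top1 (List.getLastD s ([] : Stk Γ (m + 1)))

/-- `pref1 i s`: the prefix of `s` at the `i`-th symbol (0-based) of its top order-1
stack, i.e. `s` with everything above that occurrence removed. -/
def pref1 : ∀ {m : ℕ}, ℕ → Stk Γ (m + 1) → Stk Γ (m + 1)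
  | 0, i, s => List.take (i + 1) s
  | _ + 1, i, s => modLast (pref1 i) s

/-- `popj j s`: the operation `pop_j`, removing the top order-(j-1) stack
(for `1 ≤ j ≤` order of `s`; identity-like otherwise). -/
def popj : ∀ {m : ℕ}, ℕ → Stk Γ (m + 1) → Stk Γ (m + 1)
  | 0, _, s => List.dropLast s
  | m + 1, j, s => if j = m + 2 then List.dropLast s else modLast (popj j) s

/-- `collapse s = pop_j^h s` where `(j, h)` is the link of the top symbol of `s`. -/
def collapse {m : ℕ} (s : Stk Γ (m + 1)) : Stk Γ (m + 1) :=
  match List.getLast? (top1 s) with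
  | some (_, j, h) => (popj j)^[h] s
  | none => s

/-- `push1 x s`: push the annotated symbol `x` onto the top order-1 stack of `s`. -/
def push1 : ∀ {m : ℕ}, Ann Γ → Stk Γ (m + 1) → Stk Γ (m + 1)
  | 0, x, s => List.append s [x]
  | _ + 1, x, s => modLast (push1 x) s

/-- The link-renaming operation `(·)^⟨j⟩`: increment the height of every link of
order `j`, leaving other links unchanged. -/
def renameS (j : ℕ) : ∀ {m : ℕ}, Stk Γ m → Stk Γ m
  | 0, x => if x.2.1 = j then (x.1, j, x.2.2 + 1) else x
  | _ + 1, s => List.map (renameS j) s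

/-- `pushj j s`: the operation `push_j`, duplicating the top order-(j-1) stack and
applying `(·)^⟨j⟩` to the duplicated copy (for `2 ≤ j ≤` order of `s`). -/
def pushj : ∀ {m : ℕ}, ℕ → Stk Γ (m + 1) → Stk Γ (m + 1)
  | 0, _, s => s
  | m + 1, j, s =>
      if j = m + 2 then List.append s (((List.getLast? s).map (renameS j)).toList)
      else modLast (pushj j) s

/-- Helper for the incremental order-decomposition, working on the reversed,
position-annotated top order-1 stack: select the first lambda symbol of order `> l`,
then continue with the threshold raised to its order. -/
def decompRevD (ordf : Γ → ℕ) (isLam : Γ → Bool) :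
    ℕ → List (ℕ × Ann Γ) → List (ℕ × Ann Γ)
  | _, [] => []
  | l, p :: rest =>
      if isLam p.2.1 = true ∧ l < ordf p.2.1 then
        p :: decompRevD ordf isLam (ordf p.2.1) rest
      else decompRevD ordf isLam l rest

/-- The incremental order-decomposition `Decomp_l` of an order-1 stack, with each
selected symbol paired with its position: the last lambda symbol of order `> l`,
preceded by the decomposition of the strict prefix with respect to that order.
The result is listed left-to-right (the symbol of largest order first). -/
def DecompD (ordf : Γ → ℕ) (isLam : Γ → Bool) (l : ℕ) (t : Stk Γ 1) :
    List (ℕ × Ann Γ) :=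
  (decompRevD ordf isLam l ((List.zipIdx (t : List (Ann Γ))).map Prod.swap).reverse).reverse

/-- `l`-safety of a higher-order stack `s` (of order `m+1`), for the CPDA order `n`:
(1) every symbol in `Decomp_l` of the top order-1 stack of `s` has link height 1, and
(2) whenever `n - ord a_q + 1 ≤` order of `s` (so that the link of `a_q` is not
dangling), collapsing the prefix of `s` at `a_q` yields an `l`-safe stack if `a_q` is
the last element of the decomposition, and an `ord a_{q-1}`-safe stack if `a_{q-1}`
is its right neighbour in the decomposition. A stack is safe if it is 0-safe. -/
inductive LSafe (n : ℕ) (ordf : Γ → ℕ) (isLam : Γ → Bool) :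
    ℕ → ∀ {m : ℕ}, Stk Γ (m + 1) → Prop
  | intro (l : ℕ) {m : ℕ} (s : Stk Γ (m + 1))
      (hheights : ∀ p ∈ DecompD ordf isLam l (top1 s), p.2.2.2 = 1)
      (hlast : ∀ p, (DecompD ordf isLam l (top1 s)).getLast? = some p →
          n - ordf p.2.1 + 1 ≤ m + 1 →
          LSafe n ordf isLam l (collapse (pref1 p.1 s)))
      (hadj : ∀ i p p', (DecompD ordf isLam l (top1 s))[i]? = some p →
          (DecompD ordf isLam l (top1 s))[i + 1]? = some p' →
          n - ordf p.2.1 + 1 ≤ m + 1 →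
          LSafe n ordf isLam (ordf p'.2.1) (collapse (pref1 p.1 s))) :
      LSafe n ordf isLam l s


section Aux
variable {Γ : Type}

/-- The empty order-(m+1) stack. -/
def emp (m : ℕ) : Stk Γ (m + 1) := List.nil

lemma modLast_concat {α : Type} (f : α → α) (L : List α) (a : α) :
    modLast f (L ++ [a]) = L ++ [f a] := by
  induction L with
  | nil => rfl
  | cons b L ih =>
    cases L with
    | nil => rfl
    | cons c L =>
      simp only [List.cons_append, modLast, List.append_eq] at ih ⊢
      rw [ih]

lemma top1_succ {m : ℕ} (s : Stk Γ (m + 2)) :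
    top1 s = top1 (List.getLastD (s : List (Stk Γ (m + 1))) (emp m)) := rfl

lemma top1_push1 : ∀ {m : ℕ} (x : Ann Γ) (s : Stk Γ (m + 1)),
    top1 (push1 x s) = List.append (top1 s) [x] ∨ push1 x s = s
  | 0, _, _ => Or.inl rfl
  | m + 1, x, s => by
    rcases List.eq_nil_or_concat (s : List (Stk Γ (m + 1))) with h | ⟨L, t, h⟩
    · right
      show modLast (push1 x) s = s
      rw [h]
      rfl
    · have h1 : top1 s = top1 t := by
        rw [top1_succ, h, List.concat_eq_append, List.getLastD_concat]
      have h2 : push1 x s = List.concat L (push1 x t) := by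
        show modLast (push1 x) s = _
        rw [h, List.concat_eq_append, List.concat_eq_append, modLast_concat]
      have h3 : top1 (push1 x s) = top1 (push1 x t) := by
        rw [top1_succ, h2, List.concat_eq_append, List.getLastD_concat]
      rcases top1_push1 x t with ht | ht
      · left
        rw [h3, ht, h1]
      · right
        rw [h2, ht, ← h]

lemma pref1_push1 : ∀ {m : ℕ} (x : Ann Γ) (s : Stk Γ (m + 1)) (i : ℕ),
    i + 1 ≤ List.length (top1 s : List (Ann Γ)) → pref1 i (push1 x s) = pref1 i s
  | 0, x, s, i, hi => by
    show List.take (i + 1) (List.append s [x]) = List.take (i + 1) s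
    exact List.take_append_of_le_length (l₁ := (show List (Ann Γ) from s)) hi
  | m + 1, x, s, i, hi => by
    show modLast (pref1 i) (modLast (push1 x) s) = modLast (pref1 i) s
    rcases List.eq_nil_or_concat (s : List (Stk Γ (m + 1))) with h | ⟨L, t, h⟩
    · rw [h]
      rfl
    · have h1 : top1 s = top1 t := by
        rw [top1_succ, h, List.concat_eq_append, List.getLastD_concat]
      rw [h, List.concat_eq_append, modLast_concat, modLast_concat, modLast_concat]
      rw [pref1_push1 x t i (by rw [h1] at hi; exact hi)]

lemma decompRevD_cons_low (ordf : Γ → ℕ) (isLam : Γ → Bool) (l : ℕ)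
    (p : ℕ × Ann Γ) (h : ¬ l < ordf p.2.1) (rest : List (ℕ × Ann Γ)) :
    decompRevD ordf isLam l (p :: rest) = decompRevD ordf isLam l rest := by
  simp only [decompRevD]
  rw [if_neg (fun hc => h hc.2)]

lemma mem_of_mem_decompRevD (ordf : Γ → ℕ) (isLam : Γ → Bool) :
    ∀ (l : ℕ) (L : List (ℕ × Ann Γ)) (p : ℕ × Ann Γ),
      p ∈ decompRevD ordf isLam l L → p ∈ L := by
  intro l L
  induction L generalizing l with
  | nil => intro p h; simp [decompRevD] at h
  | cons q rest ih =>
    intro p h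
    simp only [decompRevD] at h
    split at h
    · rcases List.mem_cons.mp h with h | h
      · exact h ▸ List.mem_cons_self
      · exact List.mem_cons_of_mem _ (ih _ _ h)
    · exact List.mem_cons_of_mem _ (ih _ _ h)

lemma fst_lt_of_mem_DecompD (ordf : Γ → ℕ) (isLam : Γ → Bool) (l : ℕ)
    (t : Stk Γ 1) (p : ℕ × Ann Γ) (h : p ∈ DecompD ordf isLam l t) :
    p.1 + 1 ≤ List.length (t : List (Ann Γ)) := by
  rw [DecompD, List.mem_reverse] at h
  have h2 := mem_of_mem_decompRevD ordf isLam _ _ p h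
  replace h2 := List.mem_reverse.mp h2
  obtain ⟨q, hq, rfl⟩ := List.mem_map.mp h2
  simpa using List.snd_lt_of_mem_zipIdx hq

lemma DecompD_push_low (ordf : Γ → ℕ) (isLam : Γ → Bool) (l : ℕ)
    (t : List (Ann Γ)) (a : Γ) (j h' : ℕ) (hlt : ¬ l < ordf a) :
    DecompD ordf isLam l (List.append t [(a, j, h')]) =
      DecompD ordf isLam l t := by
  unfold DecompD
  congr 1
  show decompRevD ordf isLam l (List.map Prod.swap (List.zipIdx (t ++ [(a, j, h')]))).reverse = _
  rw [List.zipIdx_append, List.zipIdx_singleton, List.map_append,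
    List.map_singleton, List.reverse_append,
    List.reverse_singleton, List.singleton_append]
  exact decompRevD_cons_low ordf isLam l _ hlt _

lemma mem_of_getLast?_eq {α : Type} {l : List α} {p : α}
    (h : l.getLast? = some p) : p ∈ l := by
  rw [List.getLast?_eq_getElem?] at h
  exact List.mem_iff_getElem?.mpr ⟨_, h⟩

end Aux

/-- Pushing a lambda symbol of order `< l` with a fresh height-1 link: if `s` is
`l`-safe and `a` is a lambda symbol with `ord a < l`, then the `l`-order-decomposition
is unchanged, `Decomp_l (push₁ a^(j,1) s) = Decomp_l s`, and hence `push₁ a^(j,1) s`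
is `l`-safe. -/
theorem LSafe.push1_lambda_low (n : ℕ) (ordf : Γ → ℕ) (isLam : Γ → Bool) {m : ℕ}
    (s : Stk Γ (m + 1)) (l : ℕ) (a : Γ) (j : ℕ)
    (ha : isLam a = true) (hord : ordf a < l) (hsafe : LSafe n ordf isLam l s) :
    DecompD ordf isLam l (top1 (push1 (a, j, 1) s)) = DecompD ordf isLam l (top1 s) ∧
      LSafe n ordf isLam l (push1 (a, j, 1) s) := by
  rcases top1_push1 (a, j, 1) s with htop | heq
  · have hlt : ¬ l < ordf a := by omega
    have hdec : DecompD ordf isLam l (top1 (push1 (a, j, 1) s)) =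
        DecompD ordf isLam l (top1 s) := by
      rw [htop]
      exact DecompD_push_low ordf isLam l (top1 s) a j 1 hlt
    refine ⟨hdec, ?_⟩
    cases hsafe with
    | intro l s hheights hlast hadj =>
      refine LSafe.intro l _ ?_ ?_ ?_
      · intro p hp
        exact hheights p (hdec ▸ hp)
      · intro p hp hnp
        have hp' : (DecompD ordf isLam l (top1 s)).getLast? = some p := by
          rw [hdec] at hp; exact hp
        have hm : p ∈ DecompD ordf isLam l (top1 s) := mem_of_getLast?_eq hp'
        have hlen := fst_lt_of_mem_DecompD ordf isLam l (top1 s) p hm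
        rw [pref1_push1 _ _ _ hlen]
        exact hlast p hp' hnp
      · intro i p p' h1 h2 hnp
        rw [hdec] at h1 h2
        have hm : p ∈ DecompD ordf isLam l (top1 s) :=
          List.mem_iff_getElem?.mpr ⟨i, h1⟩
        have hlen := fst_lt_of_mem_DecompD ordf isLam l (top1 s) p hm
        rw [pref1_push1 _ _ _ hlen]
        exact hadj i p p' h1 h2 hnp
  · rw [heq]
    exact ⟨rfl, hsafe⟩
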